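/- arXiv:2311.10083 — 3 statements merged into one kernel-verified Lean document; each statement's English description precedes it below -/
import Mathlib

section
/- Let V be a nonempty finite type, let P be a positive pmf on V, let f : V → ℝ, and let λ ∈ ℝ. Define Z = ∑_{a} P(a) · exp(λ · f(a)) and π*(a) = P(a) · exp(λ · f(a)) / Z. Then π* is the unique maximizer over all pmfs π on V of the objective π ↦ λ · (∑_{a} π(a) · f(a)) − D_KL(π‖P), and the maximum value equals log Z. -/
/-- A probability mass function on a finite type: nonnegative and sums to 1. -/
def IsPmf {V : Type*} [Fintype V] (π : V → ℝ) : Prop :=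
  (∀ a, 0 ≤ π a) ∧ ∑ a, π a = 1

/-- KL divergence `D_KL(π‖P) = ∑ a, π a * log (π a / P a)`.
Terms with `π a = 0` contribute `0`. -/
noncomputable def klDiv {V : Type*} [Fintype V] (π P : V → ℝ) : ℝ :=
  ∑ a, π a * Real.log (π a / P a)

private lemma gibbs_pos {V : Type*} [Fintype V] (π q : V → ℝ)
    (hπ0 : ∀ a, 0 ≤ π a) (hπ1 : ∑ a, π a = 1)
    (hq0 : ∀ a, 0 < q a) (hq1 : ∑ a, q a = 1) (hne : π ≠ q) :
    0 < ∑ a, π a * Real.log (π a / q a) := by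
  have key : ∀ a, π a * Real.log (π a / q a) = -(π a * Real.log (q a / π a)) := by
    intro a
    rcases eq_or_lt_of_le (hπ0 a) with h | h
    · simp [← h]
    · rw [Real.log_div (ne_of_gt h) (ne_of_gt (hq0 a)),
        Real.log_div (ne_of_gt (hq0 a)) (ne_of_gt h)]
      ring
  have hterm : ∀ a, π a * Real.log (q a / π a) ≤ q a - π a := by
    intro a
    rcases eq_or_lt_of_le (hπ0 a) with h | h
    · simp [← h]; exact (hq0 a).le
    · have hlog := Real.log_le_sub_one_of_pos (div_pos (hq0 a) h)
      calc π a * Real.log (q a / π a) ≤ π a * (q a / π a - 1) :=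
            mul_le_mul_of_nonneg_left hlog h.le
        _ = q a - π a := by field_simp
  obtain ⟨a0, ha0⟩ := Function.ne_iff.mp hne
  have hstrict : π a0 * Real.log (q a0 / π a0) < q a0 - π a0 := by
    rcases eq_or_lt_of_le (hπ0 a0) with h | h
    · simp [← h]; exact hq0 a0
    · have hne1 : q a0 / π a0 ≠ 1 := by
        intro hh
        apply ha0
        field_simp at hh
        linarith
      have hlog := Real.log_lt_sub_one_of_pos (div_pos (hq0 a0) h) hne1
      calc π a0 * Real.log (q a0 / π a0) < π a0 * (q a0 / π a0 - 1) :=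
            mul_lt_mul_of_pos_left hlog h
        _ = q a0 - π a0 := by field_simp
  have hsum : ∑ a, π a * Real.log (q a / π a) < ∑ a, (q a - π a) :=
    Finset.sum_lt_sum (fun a _ => hterm a) ⟨a0, Finset.mem_univ _, hstrict⟩
  have hzero : ∑ a, (q a - π a) = 0 := by
    rw [Finset.sum_sub_distrib, hπ1, hq1]; ring
  have : ∑ a, π a * Real.log (q a / π a) < 0 := hzero ▸ hsum
  calc (0:ℝ) < -∑ a, π a * Real.log (q a / π a) := by linarith
    _ = ∑ a, π a * Real.log (π a / q a) := by
        rw [← Finset.sum_neg_distrib]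
        exact Finset.sum_congr rfl fun a _ => (key a).symm

/-- Gibbs variational principle: with `Z = ∑ a, P a * exp (λ f a)` and
`π* a = P a * exp (λ f a) / Z`, the pmf `π*` is the unique maximizer of
`π ↦ λ · E_π[f] − D_KL(π‖P)` over all pmfs, and the maximum value is `log Z`. -/
theorem gibbs_variational_principle {V : Type*} [Fintype V] [Nonempty V]
    (P : V → ℝ) (hPpos : ∀ a, 0 < P a) (hPsum : ∑ a, P a = 1)
    (f : V → ℝ) (lam : ℝ)
    (Z : ℝ) (hZ : Z = ∑ a, P a * Real.exp (lam * f a))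
    (πstar : V → ℝ) (hπstar : ∀ a, πstar a = P a * Real.exp (lam * f a) / Z) :
    IsPmf πstar ∧
    lam * (∑ a, πstar a * f a) - klDiv πstar P = Real.log Z ∧
    ∀ π : V → ℝ, IsPmf π → π ≠ πstar →
      lam * (∑ a, π a * f a) - klDiv π P < Real.log Z := by
  have hZpos : 0 < Z := by
    rw [hZ]
    exact Finset.sum_pos (fun a _ => mul_pos (hPpos a) (Real.exp_pos _))
      Finset.univ_nonempty
  have hspos : ∀ a, 0 < πstar a := fun a => by
    rw [hπstar a]; exact div_pos (mul_pos (hPpos a) (Real.exp_pos _)) hZpos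
  have hssum : ∑ a, πstar a = 1 := by
    have : ∑ a, πstar a = (∑ a, P a * Real.exp (lam * f a)) / Z := by
      rw [Finset.sum_div]
      exact Finset.sum_congr rfl fun a _ => hπstar a
    rw [this, ← hZ, div_self (ne_of_gt hZpos)]
  have hspmf : IsPmf πstar := ⟨fun a => (hspos a).le, hssum⟩
  -- key identity
  have identity : ∀ π : V → ℝ, IsPmf π →
      lam * (∑ a, π a * f a) - klDiv π P
        = Real.log Z - ∑ a, π a * Real.log (π a / πstar a) := by
    intro π hπ
    have hlogZ : Real.log Z = ∑ a, π a * Real.log Z := by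
      rw [← Finset.sum_mul, hπ.2, one_mul]
    rw [hlogZ, klDiv, Finset.mul_sum, ← Finset.sum_sub_distrib,
      ← Finset.sum_sub_distrib]
    refine Finset.sum_congr rfl fun a _ => ?_
    rcases eq_or_lt_of_le (hπ.1 a) with h | h
    · simp [← h]
    · have hπa := ne_of_gt h
      have hlogs : Real.log (πstar a)
          = Real.log (P a) + lam * f a - Real.log Z := by
        rw [hπstar a, Real.log_div (mul_pos (hPpos a) (Real.exp_pos _)).ne' (ne_of_gt hZpos),
          Real.log_mul (ne_of_gt (hPpos a)) (Real.exp_ne_zero _), Real.log_exp]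
      rw [Real.log_div hπa (ne_of_gt (hspos a)),
        Real.log_div hπa (ne_of_gt (hPpos a)), hlogs]
      ring
  refine ⟨hspmf, ?_, ?_⟩
  · rw [identity πstar hspmf]
    have : ∑ a, πstar a * Real.log (πstar a / πstar a) = 0 := by
      refine Finset.sum_eq_zero fun a _ => ?_
      rw [div_self (ne_of_gt (hspos a)), Real.log_one, mul_zero]
    rw [this, sub_zero]
  · intro π hπ hne
    rw [identity π hπ]
    have := gibbs_pos π πstar hπ.1 hπ.2 hspos hssum hne
    linarith
end

section
/- (Classifier-free guidance decoding, Theorem 2.) Let V be a nonempty finite type, let P and P⁻ be positive pmfs on V (the pretrained next-token distributions with and without the evidence in the input, P_G(·|s_t) and P_G(·|s_t⁻)), and let λ > 0. Define Z = ∑_{a} (P(a)/P⁻(a))^λ · P(a) and π*(a) = (P(a)/P⁻(a))^λ · P(a) / Z. Then π* is the unique maximizer over all pmfs π on V of the objective π ↦ λ · ∑_{a} π(a) · log(P(a)/P⁻(a)) − D_KL(π‖P). -/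
/-- Strict Gibbs inequality. -/
lemma gibbs_strict {V : Type*} [Fintype V] (π Q : V → ℝ) (hπ : IsPmf π)
    (hQpos : ∀ a, 0 < Q a) (hQsum : ∑ a, Q a = 1) (hne : π ≠ Q) :
    0 < ∑ a, π a * Real.log (π a / Q a) := by
  have key : ∑ a, π a * Real.log (Q a / π a) < ∑ a, (Q a - π a) := by
    apply Finset.sum_lt_sum
    · intro a _
      rcases eq_or_lt_of_le (hπ.1 a) with h | h
      · simp [← h, (hQpos a).le]
      · have hlog := Real.log_le_sub_one_of_pos (div_pos (hQpos a) h)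
        have : π a * Real.log (Q a / π a) ≤ π a * (Q a / π a - 1) :=
          mul_le_mul_of_nonneg_left hlog h.le
        have hdm : π a * (Q a / π a - 1) = Q a - π a := by field_simp
        linarith
    · obtain ⟨a, ha⟩ := Function.ne_iff.mp hne
      refine ⟨a, Finset.mem_univ a, ?_⟩
      rcases eq_or_lt_of_le (hπ.1 a) with h | h
      · simpa [← h] using hQpos a
      · have hx1 : Q a / π a ≠ 1 := by
          intro hq
          rw [div_eq_one_iff_eq h.ne'] at hq
          exact ha hq.symm
        have hlog := Real.log_lt_sub_one_of_pos (div_pos (hQpos a) h) hx1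
        have : π a * Real.log (Q a / π a) < π a * (Q a / π a - 1) :=
          mul_lt_mul_of_pos_left hlog h
        have hdm : π a * (Q a / π a - 1) = Q a - π a := by field_simp
        linarith
  have hsum : ∑ a, (Q a - π a) = 0 := by
    rw [Finset.sum_sub_distrib, hQsum, hπ.2]; ring
  have hflip : ∑ a, π a * Real.log (π a / Q a) = -∑ a, π a * Real.log (Q a / π a) := by
    rw [← Finset.sum_neg_distrib]
    refine Finset.sum_congr rfl fun a _ => ?_
    rw [show π a / Q a = (Q a / π a)⁻¹ by rw [inv_div], Real.log_inv]; ring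
  rw [hflip]; linarith

/-- Classifier-free guidance decoding, Theorem 2: with positive pmfs `P`
(evidence-conditioned) and `Pm` (evidence-free), `λ > 0`,
`Z = ∑ a, (P a / Pm a) ^ λ * P a` and `π* a = (P a / Pm a) ^ λ * P a / Z`,
the pmf `π*` is the unique maximizer of
`π ↦ λ · ∑ a, π a * log (P a / Pm a) − D_KL(π‖P)` over all pmfs. -/
theorem classifier_free_guidance_optimal_policy {V : Type*} [Fintype V] [Nonempty V]
    (P : V → ℝ) (hPpos : ∀ a, 0 < P a) (hPsum : ∑ a, P a = 1)
    (Pm : V → ℝ) (hPmpos : ∀ a, 0 < Pm a) (hPmsum : ∑ a, Pm a = 1)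
    (lam : ℝ) (hlam : 0 < lam)
    (Z : ℝ) (hZ : Z = ∑ a, (P a / Pm a) ^ lam * P a)
    (πstar : V → ℝ) (hπstar : ∀ a, πstar a = (P a / Pm a) ^ lam * P a / Z) :
    IsPmf πstar ∧
    ∀ π : V → ℝ, IsPmf π → π ≠ πstar →
      lam * (∑ a, π a * Real.log (P a / Pm a)) - klDiv π P <
        lam * (∑ a, πstar a * Real.log (P a / Pm a)) - klDiv πstar P := by
  have hterm : ∀ a, 0 < (P a / Pm a) ^ lam * P a := fun a =>
    mul_pos (Real.rpow_pos_of_pos (div_pos (hPpos a) (hPmpos a)) lam) (hPpos a)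
  have hZpos : 0 < Z := by
    rw [hZ]; exact Finset.sum_pos (fun a _ => hterm a) Finset.univ_nonempty
  have hπstarpos : ∀ a, 0 < πstar a := fun a => by
    rw [hπstar a]; exact div_pos (hterm a) hZpos
  have hπstarsum : ∑ a, πstar a = 1 := by
    have : ∑ a, πstar a = (∑ a, (P a / Pm a) ^ lam * P a) / Z := by
      rw [Finset.sum_div]; exact Finset.sum_congr rfl fun a _ => hπstar a
    rw [this, ← hZ, div_self hZpos.ne']
  have hstarpmf : IsPmf πstar := ⟨fun a => (hπstarpos a).le, hπstarsum⟩
  have hlogstar : ∀ a, Real.log (πstar a) =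
      lam * Real.log (P a / Pm a) + Real.log (P a) - Real.log Z := by
    intro a
    rw [hπstar a, Real.log_div (hterm a).ne' hZpos.ne',
      Real.log_mul (Real.rpow_pos_of_pos (div_pos (hPpos a) (hPmpos a)) lam).ne' (hPpos a).ne',
      Real.log_rpow (div_pos (hPpos a) (hPmpos a))]
  -- objective identity
  have hobj : ∀ π : V → ℝ, IsPmf π →
      lam * (∑ a, π a * Real.log (P a / Pm a)) - klDiv π P =
        Real.log Z - ∑ a, π a * Real.log (π a / πstar a) := by
    intro π hπ
    have hterm2 : ∀ a, lam * (π a * Real.log (P a / Pm a)) - π a * Real.log (π a / P a) =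
        π a * Real.log Z - π a * Real.log (π a / πstar a) := by
      intro a
      rcases eq_or_lt_of_le (hπ.1 a) with h | h
      · simp [← h]
      · rw [Real.log_div h.ne' (hπstarpos a).ne', Real.log_div h.ne' (hPpos a).ne',
          hlogstar a]
        ring
    calc lam * (∑ a, π a * Real.log (P a / Pm a)) - klDiv π P
        = ∑ a, (lam * (π a * Real.log (P a / Pm a)) - π a * Real.log (π a / P a)) := by
          rw [klDiv, Finset.sum_sub_distrib, Finset.mul_sum]
      _ = ∑ a, (π a * Real.log Z - π a * Real.log (π a / πstar a)) :=
          Finset.sum_congr rfl fun a _ => hterm2 a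
      _ = Real.log Z - ∑ a, π a * Real.log (π a / πstar a) := by
          rw [Finset.sum_sub_distrib, ← Finset.sum_mul, hπ.2, one_mul]
  refine ⟨hstarpmf, fun π hπ hne => ?_⟩
  rw [hobj π hπ, hobj πstar hstarpmf]
  have hzero : ∑ a, πstar a * Real.log (πstar a / πstar a) = 0 := by
    refine Finset.sum_eq_zero fun a _ => ?_
    rw [div_self (hπstarpos a).ne', Real.log_one, mul_zero]
  rw [hzero]
  have := gibbs_strict π πstar hπ hπstarpos hπstarsum hne
  linarith
end

section
/- (Temperature sampling, Theorem 4.) Let V be a nonempty finite type, let P be a positive pmf on V, and let T > 0. Define Z = ∑_{b} P(b)^{1/T} and π*(a) = P(a)^{1/T} / Z. Then π* is the unique maximizer over all pmfs π on V of the objective π ↦ −((1/T) · D_KL(π‖P) + (1/T − 1) · H(π)). -/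
/-- Entropy `H(π) = −∑ a, π a * log (π a)`. Terms with `π a = 0` contribute `0`. -/
noncomputable def entropy {V : Type*} [Fintype V] (π : V → ℝ) : ℝ :=
  -∑ a, π a * Real.log (π a)

lemma key_pt {x y : ℝ} (hx : 0 < x) (hy : 0 < y) :
    x - y ≤ x * Real.log (x / y) := by
  have h := Real.log_le_sub_one_of_pos (div_pos hy hx)
  have h2 : x * Real.log (y / x) ≤ y - x := by
    have := mul_le_mul_of_nonneg_left h hx.le
    calc x * Real.log (y / x) ≤ x * (y / x - 1) := this
      _ = y - x := by field_simp
  have hl : Real.log (x / y) = -Real.log (y / x) := by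
    rw [← Real.log_inv]; congr 1; field_simp
  nlinarith [h2]

lemma key_pt_strict {x y : ℝ} (hx : 0 < x) (hy : 0 < y) (hne : x ≠ y) :
    x - y < x * Real.log (x / y) := by
  have hne' : y / x ≠ 1 := by
    intro h; apply hne; field_simp at h; linarith
  have h := Real.log_lt_sub_one_of_pos (div_pos hy hx) hne'
  have h2 : x * Real.log (y / x) < y - x := by
    have := mul_lt_mul_of_pos_left h hx
    calc x * Real.log (y / x) < x * (y / x - 1) := this
      _ = y - x := by field_simp
  have hl : Real.log (x / y) = -Real.log (y / x) := by
    rw [← Real.log_inv]; congr 1; field_simp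
  nlinarith [h2]

lemma gibbs {V : Type*} [Fintype V] (π q : V → ℝ) (hπ : IsPmf π)
    (hq : ∀ a, 0 < q a) (hqs : ∑ a, q a = 1) (hne : π ≠ q) :
    0 < ∑ a, π a * Real.log (π a / q a) := by
  obtain ⟨hπ0, hπ1⟩ := hπ
  set S : Finset V := Finset.univ.filter (fun a => π a ≠ 0) with hS
  have hsum_eq : ∑ a, π a * Real.log (π a / q a) = ∑ a ∈ S, π a * Real.log (π a / q a) := by
    rw [Finset.sum_filter]
    apply Finset.sum_congr rfl
    intro a _
    by_cases h : π a = 0 <;> simp [h]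
  have hπS : ∑ a ∈ S, π a = 1 := by
    rw [← hπ1, Finset.sum_filter]
    apply Finset.sum_congr rfl
    intro a _
    by_cases h : π a = 0 <;> simp [h]
  have hqS_le : ∑ a ∈ S, q a ≤ 1 := by
    rw [← hqs]
    exact Finset.sum_le_sum_of_subset_of_nonneg (Finset.subset_univ S)
      (fun a _ _ => (hq a).le)
  have hposS : ∀ a ∈ S, 0 < π a := by
    intro a ha
    have : π a ≠ 0 := (Finset.mem_filter.mp ha).2
    exact lt_of_le_of_ne (hπ0 a) (Ne.symm this)
  have hge : ∀ a ∈ S, π a - q a ≤ π a * Real.log (π a / q a) :=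
    fun a ha => key_pt (hposS a ha) (hq a)
  by_cases hcase : ∃ a ∈ S, π a ≠ q a
  · obtain ⟨a₀, ha₀, hne₀⟩ := hcase
    have hstrict : ∑ a ∈ S, (π a - q a) < ∑ a ∈ S, π a * Real.log (π a / q a) :=
      Finset.sum_lt_sum hge ⟨a₀, ha₀, key_pt_strict (hposS a₀ ha₀) (hq a₀) hne₀⟩
    have : ∑ a ∈ S, (π a - q a) = 1 - ∑ a ∈ S, q a := by
      rw [Finset.sum_sub_distrib, hπS]
    rw [hsum_eq]; linarith
  · push_neg at hcase
    -- π = q on S, so there is a ∉ S with q a > 0, hence ∑_S q < 1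
    have hex : ∃ a, a ∉ S := by
      by_contra h
      push_neg at h
      apply hne
      funext a
      have haS := h a
      by_cases hz : π a = 0
      · exact absurd haS (by simp [hS, hz])
      · exact hcase a (by simp [hS, hz])
    obtain ⟨a₀, ha₀⟩ := hex
    have hqS_lt : ∑ a ∈ S, q a < 1 := by
      rw [← hqs]
      exact Finset.sum_lt_sum_of_subset (Finset.subset_univ S) (Finset.mem_univ a₀) ha₀
        (hq a₀) (fun a _ _ => (hq a).le)
    have hge' : ∑ a ∈ S, (π a - q a) ≤ ∑ a ∈ S, π a * Real.log (π a / q a) :=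
      Finset.sum_le_sum hge
    have : ∑ a ∈ S, (π a - q a) = 1 - ∑ a ∈ S, q a := by
      rw [Finset.sum_sub_distrib, hπS]
    rw [hsum_eq]; linarith

/-- Temperature sampling, Theorem 4: with a positive pmf `P`, `T > 0`,
`Z = ∑ b, P b ^ (1/T)` and `π* a = P a ^ (1/T) / Z`, the pmf `π*` is the unique
maximizer of `π ↦ −((1/T) · D_KL(π‖P) + (1/T − 1) · H(π))` over all pmfs. -/
theorem temperature_sampling_optimal_policy {V : Type*} [Fintype V] [Nonempty V]
    (P : V → ℝ) (hPpos : ∀ a, 0 < P a) (hPsum : ∑ a, P a = 1)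
    (T : ℝ) (hT : 0 < T)
    (Z : ℝ) (hZ : Z = ∑ b, P b ^ (1 / T))
    (πstar : V → ℝ) (hπstar : ∀ a, πstar a = P a ^ (1 / T) / Z) :
    IsPmf πstar ∧
    ∀ π : V → ℝ, IsPmf π → π ≠ πstar →
      -((1 / T) * klDiv π P + (1 / T - 1) * entropy π) <
        -((1 / T) * klDiv πstar P + (1 / T - 1) * entropy πstar) := by
  have hZpos : 0 < Z := by
    rw [hZ]
    exact Finset.sum_pos (fun b _ => Real.rpow_pos_of_pos (hPpos b) _) Finset.univ_nonempty
  have hstarpos : ∀ a, 0 < πstar a := fun a => by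
    rw [hπstar a]; exact div_pos (Real.rpow_pos_of_pos (hPpos a) _) hZpos
  have hstarsum : ∑ a, πstar a = 1 := by
    simp only [hπstar]
    rw [← Finset.sum_div, ← hZ, div_self hZpos.ne']
  have hstarpmf : IsPmf πstar := ⟨fun a => (hstarpos a).le, hstarsum⟩
  -- objective identity: for any pmf π,
  -- -((1/T) klDiv π P + (1/T-1) entropy π) = Real.log Z - ∑ a, π a * Real.log (π a / πstar a)
  have hobj : ∀ π : V → ℝ, IsPmf π →
      -((1 / T) * klDiv π P + (1 / T - 1) * entropy π) =
        Real.log Z - ∑ a, π a * Real.log (π a / πstar a) := by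
    intro π ⟨hπ0, hπ1⟩
    have hpt : ∀ a, (1 / T) * (π a * Real.log (π a / P a)) -
        (1 / T - 1) * (π a * Real.log (π a)) =
        π a * Real.log (π a / πstar a) - π a * Real.log Z := by
      intro a
      by_cases h : π a = 0
      · simp [h]
      · have hπa : 0 < π a := lt_of_le_of_ne (hπ0 a) (Ne.symm h)
        have hlogstar : Real.log (πstar a) = (1 / T) * Real.log (P a) - Real.log Z := by
          rw [hπstar a, Real.log_div (Real.rpow_pos_of_pos (hPpos a) _).ne' hZpos.ne',
            Real.log_rpow (hPpos a)]
        rw [Real.log_div h (hPpos a).ne', Real.log_div h (hstarpos a).ne', hlogstar]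
        ring
    have hsum : ∑ a, ((1 / T) * (π a * Real.log (π a / P a)) -
        (1 / T - 1) * (π a * Real.log (π a))) =
        ∑ a, (π a * Real.log (π a / πstar a) - π a * Real.log Z) := by
      exact Finset.sum_congr rfl (fun a _ => hpt a)
    have hlogZsum : ∑ a, π a * Real.log Z = Real.log Z := by
      rw [← Finset.sum_mul, hπ1, one_mul]
    rw [Finset.sum_sub_distrib, Finset.sum_sub_distrib, hlogZsum,
      ← Finset.mul_sum, ← Finset.mul_sum] at hsum
    simp only [klDiv, entropy]
    linarith [hsum]
  refine ⟨hstarpmf, fun π hπ hne => ?_⟩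
  rw [hobj π hπ, hobj πstar hstarpmf]
  have hzero : ∑ a, πstar a * Real.log (πstar a / πstar a) = 0 := by
    apply Finset.sum_eq_zero
    intro a _
    rw [div_self (hstarpos a).ne']
    simp
  rw [hzero]
  have := gibbs π πstar hπ hstarpos hstarsum hne
  linarith
end
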